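/- arXiv:2109.12262 — 3 statements merged into one kernel-verified Lean document; each statement's English description precedes it below -/
import Mathlib

section
/- The function G_t(z) = (z - √(z² - 4t))/(2t) satisfies the integrated Burgers equation G_t(z) = 1/z - ∫₀ᵗ G_s(z) ∂_z G_s(z) ds for every z in the upper half-plane and t > 0. -/
/-!
The hypotheses pin down `sq u z` as the root `R_u` of `z² - 4u` in the upper half-plane, so
that `G_u(z) = 2 / (z + R_u)`, a form that is smooth in `u ∈ [0, t]` with value `1/z` at `u = 0`.
Since `G_u` solves `u G² - z G + 1 = 0`, differentiating in `z` gives `∂_z G_u = -G_u / R_u`,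
hence `G_u ∂_z G_u = -4 / (R_u (z + R_u)²)`, which is `-∂_u G_u` because `∂_u R_u = -2 / R_u`.
The fundamental theorem of calculus on `[0, t]` concludes.
-/

open Complex Filter Topology Set MeasureTheory intervalIntegral

namespace Complex

lemma sqrt_sq (w : ℂ) : sqrt w ^ 2 = w := cpow_ofNat_inv_pow w 2

lemma re_sqrt_pos {w : ℂ} (hw : w ∈ slitPlane) : 0 < (sqrt w).re := by
  rw [sqrt, cpow_inv_two_re, Real.sqrt_pos]
  rcases mem_slitPlane_iff.mp hw with h | h
  · linarith [norm_nonneg w]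
  · linarith [abs_re_lt_norm.mpr h, neg_abs_le w.re]

-- The branch of `√w` with values in the upper half-plane, holomorphic off `[0, ∞)`.
noncomputable def upperSqrt (w : ℂ) : ℂ := I * sqrt (-w)

lemma upperSqrt_sq (w : ℂ) : upperSqrt w ^ 2 = w := by
  simp [upperSqrt, mul_pow, sqrt_sq]

lemma im_upperSqrt_pos {w : ℂ} (hw : -w ∈ slitPlane) : 0 < (upperSqrt w).im := by
  simpa [upperSqrt] using re_sqrt_pos hw

lemma hasDerivAt_upperSqrt {w : ℂ} (hw : -w ∈ slitPlane) :
    HasDerivAt upperSqrt (2 * upperSqrt w)⁻¹ w := by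
  have hne : sqrt (-w) ≠ 0 := fun h0 => by simpa [h0] using re_sqrt_pos hw
  refine (((hasDerivAt_sqrt hw).comp w (hasDerivAt_neg w)).const_mul I).congr_deriv ?_
  rw [show (-1 / 2 : ℂ) = -2⁻¹ by norm_num, cpow_neg, ← sqrt, upperSqrt]
  field_simp
  simp [I_sq]

lemma eq_of_sq_eq_sq_of_im {a b : ℂ} (h : a ^ 2 = b ^ 2) (ha : 0 ≤ a.im) (hb : 0 < b.im) :
    a = b := by
  rcases sq_eq_sq_iff_eq_or_eq_neg.mp h with h | h
  · exact h
  · rw [h, neg_im] at ha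
    linarith

lemma eq_upperSqrt {a w : ℂ} (h : a ^ 2 = w) (ha : 0 ≤ a.im) (hw : -w ∈ slitPlane) :
    a = upperSqrt w :=
  eq_of_sq_eq_sq_of_im (by rw [h, upperSqrt_sq]) ha (im_upperSqrt_pos hw)

lemma neg_sq_sub_mem_slitPlane {z : ℂ} (hz : 0 < z.im) {c : ℝ} (hc : 0 ≤ c) :
    -(z ^ 2 - c) ∈ slitPlane := by
  rw [mem_slitPlane_iff]
  by_cases hre : z.re = 0
  · left
    simp only [sq, neg_sub, sub_re, ofReal_re, mul_re, hre, mul_zero, zero_sub, sub_neg_eq_add]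
    nlinarith
  · right
    simpa [sq, mul_comm] using ⟨hre, hz.ne'⟩

lemma upperSqrt_sq_of_im_pos {z : ℂ} (hz : 0 < z.im) : upperSqrt (z ^ 2) = z :=
  (eq_upperSqrt rfl hz.le (by simpa using neg_sq_sub_mem_slitPlane hz le_rfl)).symm

end Complex

noncomputable def semicircleRoot (u : ℝ) (w : ℂ) : ℂ := upperSqrt (w ^ 2 - 4 * u)

-- `(w - √(w² - 4u)) / (2u)` with rationalized numerator, so that it is meaningful at `u = 0`.
noncomputable def semicircleStieltjes (u : ℝ) (w : ℂ) : ℂ := 2 / (w + semicircleRoot u w)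

noncomputable def semicircleStieltjesTimeDeriv (u : ℝ) (w : ℂ) : ℂ :=
  4 / (semicircleRoot u w * (w + semicircleRoot u w) ^ 2)

section semicircleRoot

variable {u : ℝ} {w : ℂ}

lemma semicircleRoot_sq (u : ℝ) (w : ℂ) : semicircleRoot u w ^ 2 = w ^ 2 - 4 * u :=
  upperSqrt_sq _

lemma neg_discr_mem_slitPlane (hw : 0 < w.im) (hu : 0 ≤ u) :
    -(w ^ 2 - 4 * (u : ℂ)) ∈ slitPlane := by
  simpa using neg_sq_sub_mem_slitPlane hw (c := 4 * u) (by positivity)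

lemma im_semicircleRoot_pos (hw : 0 < w.im) (hu : 0 ≤ u) : 0 < (semicircleRoot u w).im :=
  im_upperSqrt_pos (neg_discr_mem_slitPlane hw hu)

lemma semicircleRoot_ne_zero (hw : 0 < w.im) (hu : 0 ≤ u) : semicircleRoot u w ≠ 0 :=
  fun h => by simpa [h] using im_semicircleRoot_pos hw hu

lemma add_semicircleRoot_ne_zero (hw : 0 < w.im) (hu : 0 ≤ u) : w + semicircleRoot u w ≠ 0 :=
  fun h => by simpa [← add_im, h] using add_pos hw (im_semicircleRoot_pos hw hu)

lemma eq_semicircleRoot {s : ℂ} (hw : 0 < w.im) (hu : 0 ≤ u) (hs : s ^ 2 = w ^ 2 - 4 * u)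
    (hs_im : 0 ≤ s.im) : s = semicircleRoot u w :=
  eq_upperSqrt hs hs_im (neg_discr_mem_slitPlane hw hu)

lemma semicircleRoot_zero (hw : 0 < w.im) : semicircleRoot 0 w = w := by
  simpa [semicircleRoot] using upperSqrt_sq_of_im_pos hw

lemma hasDerivAt_semicircleRoot_time (hw : 0 < w.im) (hu : 0 ≤ u) :
    HasDerivAt (fun v => semicircleRoot v w) (-2 / semicircleRoot u w) u := by
  have hdiscr : HasDerivAt (fun v : ℂ => w ^ 2 - 4 * v) (-4) u := by
    simpa using ((hasDerivAt_id (u : ℂ)).const_mul 4).const_sub (w ^ 2)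
  refine (HasDerivAt.comp (h := fun v : ℂ => w ^ 2 - 4 * v) (u : ℂ)
    (hasDerivAt_upperSqrt (neg_discr_mem_slitPlane hw hu)) hdiscr).comp_ofReal.congr_deriv ?_
  rw [semicircleRoot]
  field_simp
  norm_num

end semicircleRoot

section semicircleStieltjes

variable {u : ℝ} {w : ℂ}

lemma semicircleStieltjes_zero (hw : 0 < w.im) : semicircleStieltjes 0 w = 1 / w := by
  have hw0 : w ≠ 0 := fun h => by simp [h] at hw
  rw [semicircleStieltjes, semicircleRoot_zero hw]
  field_simp
  ring

lemma div_eq_semicircleStieltjes {s : ℂ} (hw : 0 < w.im) (hu : 0 < u)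
    (hs : s ^ 2 = w ^ 2 - 4 * u) (hs_im : 0 ≤ s.im) :
    (w - s) / (2 * u) = semicircleStieltjes u w := by
  have hu0 : (u : ℂ) ≠ 0 := ofReal_ne_zero.mpr hu.ne'
  have hws := add_semicircleRoot_ne_zero hw hu.le
  rw [semicircleStieltjes]
  rw [← eq_semicircleRoot hw hu.le hs hs_im] at hws ⊢
  field_simp
  linear_combination -hs

lemma hasDerivAt_semicircleStieltjes_time (hw : 0 < w.im) (hu : 0 ≤ u) :
    HasDerivAt (fun v => semicircleStieltjes v w) (semicircleStieltjesTimeDeriv u w) u := by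
  have hR := semicircleRoot_ne_zero hw hu
  refine ((hasDerivAt_const _ 2).div ((hasDerivAt_semicircleRoot_time hw hu).const_add w)
    (add_semicircleRoot_ne_zero hw hu)).congr_deriv ?_
  rw [semicircleStieltjesTimeDeriv]
  field_simp
  ring

lemma continuousOn_semicircleStieltjesTimeDeriv (hw : 0 < w.im) :
    ContinuousOn (semicircleStieltjesTimeDeriv · w) (Ici 0) := by
  have hR : ContinuousOn (semicircleRoot · w) (Ici 0) := fun u hu =>
    (hasDerivAt_semicircleRoot_time hw hu).continuousAt.continuousWithinAt
  exact continuousOn_const.div (hR.mul ((continuousOn_const.add hR).pow 2)) fun u hu =>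
    mul_ne_zero (semicircleRoot_ne_zero hw hu) (pow_ne_zero 2 (add_semicircleRoot_ne_zero hw hu))

end semicircleStieltjes

lemma HasDerivAt.mul_sub_eq_of_quadratic {f : ℂ → ℂ} {f' z a : ℂ} (hf : HasDerivAt f f' z)
    (hq : ∀ᶠ w in 𝓝 z, a * f w ^ 2 - w * f w + 1 = 0) : f' * (2 * a * f z - z) = f z := by
  have h : HasDerivAt (fun w => a * f w ^ 2 - w * f w + 1)
      (a * (2 * f z * f') - (1 * f z + z * f')) z := by
    simpa using (((hf.pow 2).const_mul a).sub ((hasDerivAt_id z).mul hf)).add_const 1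
  linear_combination h.unique ((hasDerivAt_const z 0).congr_of_eventuallyEq hq)

lemma mul_deriv_eq_neg_semicircleStieltjesTimeDeriv {sq G : ℂ → ℂ} {g' z : ℂ} {u : ℝ}
    (hu : 0 < u) (hz : 0 < z.im) (hsq : ∀ w : ℂ, 0 < w.im → sq w ^ 2 = w ^ 2 - 4 * (u : ℂ))
    (hsq_im : 0 ≤ (sq z).im) (hG : ∀ w : ℂ, 0 < w.im → G w = (w - sq w) / (2 * (u : ℂ)))
    (hG' : HasDerivAt G g' z) :
    G z * g' = -semicircleStieltjesTimeDeriv u z := by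
  have hu0 : (u : ℂ) ≠ 0 := ofReal_ne_zero.mpr hu.ne'
  have hquad : ∀ᶠ w in 𝓝 z, (u : ℂ) * G w ^ 2 - w * G w + 1 = 0 := by
    filter_upwards [(isOpen_lt continuous_const continuous_im).mem_nhds hz] with w hw
    rw [hG w hw]
    field_simp
    linear_combination hsq w hw
  have hderiv := hG'.mul_sub_eq_of_quadratic hquad
  have hGz : G z = semicircleStieltjes u z :=
    (hG z hz).trans (div_eq_semicircleStieltjes hz hu (hsq z hz) hsq_im)
  rw [hGz, semicircleStieltjes] at hderiv ⊢
  rw [semicircleStieltjesTimeDeriv]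
  have hR := semicircleRoot_ne_zero hz hu.le
  have hzR := add_semicircleRoot_ne_zero hz hu.le
  have hRsq := semicircleRoot_sq u z
  field_simp at hderiv ⊢
  linear_combination -2 * hderiv + 2 * g' * hRsq

theorem burgers_integrated
    (sq : ℝ → ℂ → ℂ)
    (hsq : ∀ u : ℝ, 0 < u → ∀ w : ℂ, 0 < w.im →
      (sq u w) ^ 2 = w ^ 2 - 4 * (u : ℂ) ∧ 0 ≤ (sq u w).im)
    (G : ℝ → ℂ → ℂ)
    (hG : ∀ u : ℝ, 0 < u → ∀ w : ℂ, 0 < w.im →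
      G u w = (w - sq u w) / (2 * (u : ℂ)))
    (Gz : ℝ → ℂ → ℂ)
    (t : ℝ) (ht : 0 < t) (z : ℂ) (hz : 0 < z.im)
    (hGz : ∀ u ∈ Set.Ioc (0 : ℝ) t, HasDerivAt (G u) (Gz u z) z) :
    G t z = 1 / z - ∫ s in (0 : ℝ)..t, G s z * Gz s z := by
  have hGt : G t z = semicircleStieltjes t z :=
    (hG t ht z hz).trans (div_eq_semicircleStieltjes hz ht (hsq t ht z hz).1 (hsq t ht z hz).2)
  have hprod : ∀ u ∈ Ioc 0 t, G u z * Gz u z = -semicircleStieltjesTimeDeriv u z := fun u hu =>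
    mul_deriv_eq_neg_semicircleStieltjesTimeDeriv hu.1 hz (fun w hw => (hsq u hu.1 w hw).1)
      (hsq u hu.1 z hz).2 (hG u hu.1) (hGz u hu)
  have hFTC : ∫ u in 0..t, semicircleStieltjesTimeDeriv u z =
      semicircleStieltjes t z - semicircleStieltjes 0 z :=
    integral_eq_sub_of_hasDerivAt
      (fun u hu => hasDerivAt_semicircleStieltjes_time hz (uIcc_of_le ht.le ▸ hu).1)
      ((continuousOn_semicircleStieltjesTimeDeriv hz).mono
        (uIcc_of_le ht.le ▸ Icc_subset_Ici_self)).intervalIntegrable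
  rw [integral_congr_ae (ae_of_all _ fun u hu => hprod u (uIoc_of_le ht.le ▸ hu)),
    intervalIntegral.integral_neg, hFTC, semicircleStieltjes_zero hz, hGt]
  ring
end

section
/- For any 1-Lipschitz-type bound: if f : ℝ → ℝ is C¹ with bounded derivative and A, B are N×N real symmetric matrices with ordered eigenvalues λ₁(A) ≥ ... ≥ λ_N(A) and λ₁(B) ≥ ... ≥ λ_N(B), then |(1/N)∑_i f(λ_i(A)) - (1/N)∑_i f(λ_i(B))|² ≤ (‖f'‖_∞²/N) ∑_{i,j} (A_{ij} - B_{ij})². -/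
/-!
A function with `|f'| ≤ C` is `C`-Lipschitz, so by Cauchy–Schwarz the left-hand side is at most
`C² / N * ∑ i, (μ i - ν i) ^ 2`. The Hoffman–Wielandt inequality bounds this sum by the squared
Frobenius distance of `A` and `B`. To prove it, write `A = U diag(μ) Uᵀ`, `B = V diag(ν) Vᵀ` with
`U`, `V` orthogonal; then `∑ i j, A i j * B i j = ∑ k l, W k l ^ 2 * μ k * ν l` for the orthogonal
matrix `W = Uᵀ V`, whose squared entries form a doubly stochastic matrix. By Birkhoff's theorem this
linear form is maximised at a permutation matrix, and by the rearrangement inequality at the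
identity, since `μ` and `ν` are similarly ordered.
-/

open Finset Matrix

section
variable {n : Type*} [Fintype n] [DecidableEq n]

lemma sum_apply_mul_apply_conj_diagonal (U V : Matrix n n ℝ) (μ ν : n → ℝ) :
    ∑ i, ∑ j, (U * diagonal μ * star U) i j * (V * diagonal ν * star V) i j
      = ∑ k, ∑ l, (star U * V) k l ^ 2 * (μ k * ν l) := by
  simp only [mul_apply, diagonal_apply, mul_ite, mul_zero, sum_ite_eq', mem_univ, if_true,
    star_apply, star_trivial, sq, sum_mul, mul_sum]
  rw [sum_comm_cycle]
  refine (sum_congr rfl fun l _ ↦ sum_comm_cycle).trans ?_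
  rw [sum_comm]
  exact sum_congr rfl fun k _ ↦ sum_congr rfl fun l _ ↦ sum_congr rfl fun i _ ↦
    sum_congr rfl fun j _ ↦ by ring

lemma sum_sq_apply_conj_diagonal {U : Matrix n n ℝ} (hU : U ∈ unitaryGroup n ℝ) (μ : n → ℝ) :
    ∑ i, ∑ j, (U * diagonal μ * star U) i j ^ 2 = ∑ k, μ k ^ 2 := by
  simp_rw [sq (_ : ℝ), sum_apply_mul_apply_conj_diagonal, mem_unitaryGroup_iff'.mp hU, one_apply]
  simp

lemma sq_apply_mem_doublyStochastic_of_mem_unitaryGroup {W : Matrix n n ℝ}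
    (hW : W ∈ unitaryGroup n ℝ) :
    of (fun i j ↦ W i j ^ 2) ∈ doublyStochastic ℝ n := by
  refine mem_doublyStochastic_iff_sum.mpr ⟨fun i j ↦ sq_nonneg _, fun i ↦ ?_, fun j ↦ ?_⟩
  · simpa [mul_apply, sq] using congr_fun₂ (mem_unitaryGroup_iff.mp hW) i i
  · simpa [mul_apply, sq] using congr_fun₂ (mem_unitaryGroup_iff'.mp hW) j j

lemma sum_apply_mul_mul_le_of_mem_doublyStochastic {S : Matrix n n ℝ}
    (hS : S ∈ doublyStochastic ℝ n) {μ ν : n → ℝ} (h : Monovary μ ν) :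
    ∑ k, ∑ l, S k l * (μ k * ν l) ≤ ∑ k, μ k * ν k := by
  rw [← SetLike.mem_coe, doublyStochastic_eq_convexHull_permMatrix] at hS
  refine convexHull_min ?_
    (convex_halfSpace_le (f := fun M : Matrix n n ℝ ↦ ∑ k, ∑ l, M k l * (μ k * ν l)) ?_ _) hS
  · rintro _ ⟨σ, rfl⟩
    simpa [PEquiv.toMatrix_apply, ite_mul] using h.sum_mul_comp_perm_le_sum_mul (σ := σ)
  · constructor <;> intros <;> simp [add_mul, sum_add_distrib, mul_sum, mul_assoc]

lemma sum_sq_sub_le_sum_sq_sub_conj_diagonal {U V : Matrix n n ℝ} (hU : U ∈ unitaryGroup n ℝ)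
    (hV : V ∈ unitaryGroup n ℝ) {μ ν : n → ℝ} (h : Monovary μ ν) :
    ∑ k, (μ k - ν k) ^ 2
      ≤ ∑ i, ∑ j, ((U * diagonal μ * star U) i j - (V * diagonal ν * star V) i j) ^ 2 := by
  have hW : star U * V ∈ unitaryGroup n ℝ := mul_mem (Unitary.star_mem hU) hV
  have hcross := sum_apply_mul_mul_le_of_mem_doublyStochastic
    (sq_apply_mem_doublyStochastic_of_mem_unitaryGroup hW) h
  simp only [of_apply, ← sum_apply_mul_apply_conj_diagonal] at hcross
  simp only [sub_sq, sum_add_distrib, sum_sub_distrib, mul_assoc (2 : ℝ), ← mul_sum,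
    sum_sq_apply_conj_diagonal hU, sum_sq_apply_conj_diagonal hV]
  linarith

lemma Matrix.IsHermitian.exists_mem_unitaryGroup_eq_conj_diagonal {A : Matrix n n ℝ}
    (hA : A.IsHermitian) (σ : Equiv.Perm n) :
    ∃ U ∈ unitaryGroup n ℝ, A = U * diagonal (hA.eigenvalues ∘ σ) * star U := by
  set U : Matrix n n ℝ := (hA.eigenvectorUnitary : Matrix n n ℝ)
  have hU : U ∈ unitaryGroup n ℝ := hA.eigenvectorUnitary.2
  refine ⟨U.submatrix id σ, ?_, ?_⟩
  · rw [mem_unitaryGroup_iff', star_eq_conjTranspose, conjTranspose_submatrix,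
      ← submatrix_mul _ _ _ _ _ Function.bijective_id, ← star_eq_conjTranspose,
      mem_unitaryGroup_iff'.mp hU, submatrix_one_equiv]
  · rw [← submatrix_diagonal_equiv, submatrix_mul_equiv, star_eq_conjTranspose,
      conjTranspose_submatrix, submatrix_mul_equiv, submatrix_id_id, ← star_eq_conjTranspose]
    conv_lhs => rw [hA.spectral_theorem]
    simp [RCLike.ofReal_real_eq_id, U]

theorem Matrix.IsHermitian.sum_sq_eigenvalues_sub_le {A B : Matrix n n ℝ} (hA : A.IsHermitian)
    (hB : B.IsHermitian) {σ τ : Equiv.Perm n}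
    (h : Monovary (hA.eigenvalues ∘ σ) (hB.eigenvalues ∘ τ)) :
    ∑ k, (hA.eigenvalues (σ k) - hB.eigenvalues (τ k)) ^ 2 ≤ ∑ i, ∑ j, (A i j - B i j) ^ 2 := by
  obtain ⟨U, hU, hAU⟩ := hA.exists_mem_unitaryGroup_eq_conj_diagonal σ
  obtain ⟨V, hV, hBV⟩ := hB.exists_mem_unitaryGroup_eq_conj_diagonal τ
  exact (sum_sq_sub_le_sum_sq_sub_conj_diagonal hU hV h).trans_eq (by rw [← hAU, ← hBV])

end

lemma abs_sub_le_of_abs_deriv_le {f : ℝ → ℝ} (hf : Differentiable ℝ f) {C : ℝ}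
    (hC : ∀ x, |deriv f x| ≤ C) (x y : ℝ) : |f x - f y| ≤ C * |x - y| :=
  convex_univ.norm_image_sub_le_of_norm_deriv_le (fun z _ ↦ hf z) (fun z _ ↦ hC z)
    (Set.mem_univ y) (Set.mem_univ x)

lemma sq_abs_mean_sub_le {ι : Type*} [Fintype ι] {g : ℝ → ℝ} {C : ℝ}
    (hg : ∀ x y, |g x - g y| ≤ C * |x - y|) (μ ν : ι → ℝ) :
    |(1 / (Fintype.card ι : ℝ)) * ∑ i, g (μ i) - (1 / (Fintype.card ι : ℝ)) * ∑ i, g (ν i)| ^ 2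
      ≤ (C ^ 2 / Fintype.card ι) * ∑ i, (μ i - ν i) ^ 2 := by
  have hsq (i : ι) : (g (μ i) - g (ν i)) ^ 2 ≤ C ^ 2 * (μ i - ν i) ^ 2 := by
    rw [← sq_abs, ← sq_abs (μ i - ν i), ← mul_pow]
    exact pow_le_pow_left₀ (abs_nonneg _) (hg _ _) 2
  calc _ = ((∑ i, (g (μ i) - g (ν i))) / Fintype.card ι) ^ 2 := by
        rw [sq_abs, ← mul_sub, ← sum_sub_distrib, one_div_mul_eq_div]
    _ ≤ (∑ i, (g (μ i) - g (ν i)) ^ 2) / Fintype.card ι := sum_div_card_sq_le_sum_sq_div_card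
    _ ≤ (∑ i, C ^ 2 * (μ i - ν i) ^ 2) / Fintype.card ι := by gcongr with i; exact hsq i
    _ = _ := by rw [← mul_sum, mul_div_right_comm]

theorem empirical_lipschitz_bound_general (N : ℕ)
    (A B : Matrix (Fin N) (Fin N) ℝ)
    (hA : A.IsHermitian) (hB : B.IsHermitian)
    (μ ν : Fin N → ℝ)
    (σ τ : Equiv.Perm (Fin N))
    (hμ : μ = hA.eigenvalues ∘ σ) (hν : ν = hB.eigenvalues ∘ τ)
    (hμa : Antitone μ) (hνa : Antitone ν)
    (f : ℝ → ℝ) (hf : ContDiff ℝ 1 f)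
    (C : ℝ) (hC : ∀ x, |deriv f x| ≤ C) :
    |(1 / (N : ℝ)) * ∑ i, f (μ i) - (1 / (N : ℝ)) * ∑ i, f (ν i)| ^ 2
      ≤ (C ^ 2 / (N : ℝ)) * ∑ i : Fin N, ∑ j : Fin N, (A i j - B i j) ^ 2 := by
  have hlip := abs_sub_le_of_abs_deriv_le (hf.differentiable one_ne_zero) hC
  have hmean := sq_abs_mean_sub_le hlip μ ν
  rw [Fintype.card_fin] at hmean
  subst hμ hν
  have hHW := hA.sum_sq_eigenvalues_sub_le hB (hμa.monovary hνa)
  exact hmean.trans (mul_le_mul_of_nonneg_left hHW (by positivity))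

theorem empirical_lipschitz_bound (N : ℕ) (hN : 1 ≤ N)
    (A B : Matrix (Fin N) (Fin N) ℝ)
    (hA : A.IsHermitian) (hB : B.IsHermitian)
    (μ ν : Fin N → ℝ)
    (σ τ : Equiv.Perm (Fin N))
    (hμ : μ = hA.eigenvalues ∘ σ) (hν : ν = hB.eigenvalues ∘ τ)
    (hμa : Antitone μ) (hνa : Antitone ν)
    (f : ℝ → ℝ) (hf : ContDiff ℝ 1 f)
    (C : ℝ) (hC : ∀ x, |deriv f x| ≤ C) :
    |(1 / (N : ℝ)) * ∑ i, f (μ i) - (1 / (N : ℝ)) * ∑ i, f (ν i)| ^ 2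
      ≤ (C ^ 2 / (N : ℝ)) * ∑ i : Fin N, ∑ j : Fin N, (A i j - B i j) ^ 2 :=
  empirical_lipschitz_bound_general N A B hA hB μ ν σ τ hμ hν hμa hνa f hf C hC
end

section
/- Hoffman–Wielandt inequality: if A and B are N×N real symmetric matrices with eigenvalues λ₁(A) ≥ ... ≥ λ_N(A) and λ₁(B) ≥ ... ≥ λ_N(B) arranged in decreasing order, then ∑_{i=1}^N (λ_i(A) - λ_i(B))² ≤ ∑_{i,j=1}^N (A_{ij} - B_{ij})² (the squared Frobenius norm of A - B). -/
open Finset Matrix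

lemma hw_ds {n : ℕ} (s : Matrix (Fin (n+1)) (Fin (n+1)) ℝ)
    (hpos : ∀ i j, 0 ≤ s i j) (hrow : ∀ i, ∑ j, s i j = 1) (hcol : ∀ j, ∑ i, s i j = 1)
    (μ ν : Fin (n+1) → ℝ) (hμa : Antitone μ) (hνa : Antitone ν) :
    ∑ i, ∑ j, s i j * (μ i * ν j) ≤ ∑ i, μ i * ν i := by
  classical
  set χ : Fin (n+1) → Fin (n+1) → ℝ := fun i k => if i ≤ k then 1 else 0 with hχ
  have hχ0 : ∀ i k, 0 ≤ χ i k := by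
    intro i k; simp only [hχ]; split <;> norm_num
  have hχ1 : ∀ i k, χ i k ≤ 1 := by
    intro i k; simp only [hχ]; split <;> norm_num
  set a : Fin (n+1) → ℝ :=
    fun k => μ k - (if h : (k:ℕ)+1 < n+1 then μ ⟨(k:ℕ)+1, h⟩ else 0) with ha
  set b : Fin (n+1) → ℝ :=
    fun k => ν k - (if h : (k:ℕ)+1 < n+1 then ν ⟨(k:ℕ)+1, h⟩ else 0) with hb
  -- telescoping representation
  have htel : ∀ (f : Fin (n+1) → ℝ) (i : Fin (n+1)),
      ∑ k, (f k - (if h : (k:ℕ)+1 < n+1 then f ⟨(k:ℕ)+1, h⟩ else 0)) * χ i k = f i := by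
    intro f i
    induction i using Fin.reverseInduction with
    | last =>
      rw [Finset.sum_eq_single (Fin.last n)]
      · have h1 : χ (Fin.last n) (Fin.last n) = 1 := by simp [hχ]
        have h2 : ¬ ((Fin.last n : ℕ) + 1 < n + 1) := by simp [Fin.last]
        rw [h1, dif_neg h2]; ring
      · intro k _ hk
        have : ¬ (Fin.last n ≤ k) := by
          simpa [Fin.last_le_iff] using hk
        simp [hχ, this]
      · simp
    | cast i ih =>
      have hsplit : ∀ k, χ (Fin.castSucc i) k
          = χ (Fin.succ i) k + (if k = Fin.castSucc i then 1 else 0) := by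
        intro k
        by_cases h : k = Fin.castSucc i
        · subst h
          have h2 : ¬ (Fin.succ i ≤ Fin.castSucc i) := by
            simp [Fin.le_def]
        
          simp [hχ, h2]
        · have heq : (Fin.castSucc i ≤ k) ↔ (Fin.succ i ≤ k) := by
            rw [Fin.le_def, Fin.le_def]
            simp only [Fin.coe_castSucc, Fin.val_succ]
            constructor
            · intro hle
              rcases Nat.eq_or_lt_of_le hle with h' | h'
              · exfalso; apply h; apply Fin.ext; simp [← h']
              · omega
            · omega
          simp [hχ, heq, h]
      simp only [hsplit, mul_add, Finset.sum_add_distrib]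
      rw [ih]
      have hlast : ∑ k, (f k - (if h : (k:ℕ)+1 < n+1 then f ⟨(k:ℕ)+1, h⟩ else 0)) *
          (if k = Fin.castSucc i then 1 else 0)
          = f (Fin.castSucc i) - f (Fin.succ i) := by
        rw [Finset.sum_eq_single (Fin.castSucc i)]
        · have h2 : ((Fin.castSucc i : ℕ)) + 1 < n + 1 := by
            simp only [Fin.coe_castSucc]; omega
          rw [if_pos rfl, dif_pos h2]
          have h3 : (⟨((Fin.castSucc i : ℕ)) + 1, h2⟩ : Fin (n+1)) = Fin.succ i := by
            apply Fin.ext; simp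
          rw [h3]; ring
        · intro k _ hk; rw [if_neg hk]; ring
        · simp
      rw [hlast]; ring
  have hμrep : ∀ i, ∑ k, a k * χ i k = μ i := fun i => htel μ i
  have hνrep : ∀ j, ∑ l, b l * χ j l = ν j := fun j => htel ν j
  set Q : Fin (n+1) → Fin (n+1) → ℝ := fun k l => ∑ i, ∑ j, s i j * (χ i k * χ j l) with hQ
  set P : Fin (n+1) → Fin (n+1) → ℝ := fun k l => ∑ i, χ i k * χ i l with hP
  -- expansions
  have hTQ : ∑ i, ∑ j, s i j * (μ i * ν j) = ∑ k, ∑ l, a k * b l * Q k l := by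
    calc ∑ i, ∑ j, s i j * (μ i * ν j)
        = ∑ i, ∑ j, ∑ k, ∑ l, a k * b l * (s i j * (χ i k * χ j l)) := by
          refine Finset.sum_congr rfl fun i _ => Finset.sum_congr rfl fun j _ => ?_
          rw [← hμrep i, ← hνrep j, Finset.sum_mul_sum, Finset.mul_sum]
          refine Finset.sum_congr rfl fun k _ => ?_
          rw [Finset.mul_sum]
          exact Finset.sum_congr rfl fun l _ => by ring
      _ = ∑ i, ∑ k, ∑ j, ∑ l, a k * b l * (s i j * (χ i k * χ j l)) := by
          exact Finset.sum_congr rfl fun i _ => Finset.sum_comm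
      _ = ∑ k, ∑ i, ∑ j, ∑ l, a k * b l * (s i j * (χ i k * χ j l)) := Finset.sum_comm
      _ = ∑ k, ∑ i, ∑ l, ∑ j, a k * b l * (s i j * (χ i k * χ j l)) := by
          exact Finset.sum_congr rfl fun k _ => Finset.sum_congr rfl fun i _ => Finset.sum_comm
      _ = ∑ k, ∑ l, ∑ i, ∑ j, a k * b l * (s i j * (χ i k * χ j l)) := by
          exact Finset.sum_congr rfl fun k _ => Finset.sum_comm
      _ = ∑ k, ∑ l, a k * b l * Q k l := by
          refine Finset.sum_congr rfl fun k _ => Finset.sum_congr rfl fun l _ => ?_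
          rw [hQ, Finset.mul_sum]
          refine Finset.sum_congr rfl fun i _ => ?_
          rw [Finset.mul_sum]
  have hDP : ∑ i, μ i * ν i = ∑ k, ∑ l, a k * b l * P k l := by
    calc ∑ i, μ i * ν i
        = ∑ i, ∑ k, ∑ l, a k * b l * (χ i k * χ i l) := by
          refine Finset.sum_congr rfl fun i _ => ?_
          rw [← hμrep i, ← hνrep i, Finset.sum_mul_sum]
          refine Finset.sum_congr rfl fun k _ => Finset.sum_congr rfl fun l _ => by ring
      _ = ∑ k, ∑ i, ∑ l, a k * b l * (χ i k * χ i l) := Finset.sum_comm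
      _ = ∑ k, ∑ l, ∑ i, a k * b l * (χ i k * χ i l) := by
          exact Finset.sum_congr rfl fun k _ => Finset.sum_comm
      _ = ∑ k, ∑ l, a k * b l * P k l := by
          refine Finset.sum_congr rfl fun k _ => Finset.sum_congr rfl fun l _ => ?_
          rw [hP, Finset.mul_sum]
  rw [hTQ, hDP]
  -- termwise comparison
  refine Finset.sum_le_sum fun k _ => Finset.sum_le_sum fun l _ => ?_
  by_cases hk : (k:ℕ)+1 < n+1
  · by_cases hl : (l:ℕ)+1 < n+1
    · -- both non-last: nonneg coefficients and Q ≤ P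
      have hak : 0 ≤ a k := by
        rw [ha]; simp only [dif_pos hk]
        have : k ≤ (⟨(k:ℕ)+1, hk⟩ : Fin (n+1)) := by rw [Fin.le_def]; simp
        linarith [hμa this]
      have hbl : 0 ≤ b l := by
        rw [hb]; simp only [dif_pos hl]
        have : l ≤ (⟨(l:ℕ)+1, hl⟩ : Fin (n+1)) := by rw [Fin.le_def]; simp
        linarith [hνa this]
      have hQP : Q k l ≤ P k l := by
        rcases le_total k l with hkl | hkl
        · have hPeq : P k l = ∑ i, χ i k := by
            rw [hP]
            refine Finset.sum_congr rfl fun i _ => ?_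
            by_cases h : i ≤ k
            · have h' : i ≤ l := le_trans h hkl
              simp [hχ, h, h']
            · simp [hχ, h]
          rw [hPeq, hQ]
          calc ∑ i, ∑ j, s i j * (χ i k * χ j l)
              ≤ ∑ i, ∑ j, s i j * χ i k := by
                refine Finset.sum_le_sum fun i _ => Finset.sum_le_sum fun j _ => ?_
                exact mul_le_mul_of_nonneg_left
                  (mul_le_of_le_one_right (hχ0 i k) (hχ1 j l)) (hpos i j)
            _ = ∑ i, χ i k := by
                refine Finset.sum_congr rfl fun i _ => ?_
                rw [← Finset.sum_mul, hrow i, one_mul]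
        · have hPeq : P k l = ∑ i, χ i l := by
            rw [hP]
            refine Finset.sum_congr rfl fun i _ => ?_
            by_cases h : i ≤ l
            · have h' : i ≤ k := le_trans h hkl
              simp [hχ, h, h']
            · simp [hχ, h]
          rw [hPeq, hQ]
          calc ∑ i, ∑ j, s i j * (χ i k * χ j l)
              ≤ ∑ i, ∑ j, s i j * χ j l := by
                refine Finset.sum_le_sum fun i _ => Finset.sum_le_sum fun j _ => ?_
                exact mul_le_mul_of_nonneg_left
                  (mul_le_of_le_one_left (hχ0 j l) (hχ1 i k)) (hpos i j)
            _ = ∑ j, χ j l := by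
                rw [Finset.sum_comm]
                refine Finset.sum_congr rfl fun j _ => ?_
                rw [← Finset.sum_mul, hcol j, one_mul]
      exact mul_le_mul_of_nonneg_left hQP (mul_nonneg hak hbl)
    · -- l is the last index : Q = P
      have hlfull : ∀ j, χ j l = 1 := by
        intro j
        have : j ≤ l := by
          rw [Fin.le_def]; omega
        simp [hχ, this]
      have : Q k l = P k l := by
        rw [hQ, hP]
        calc ∑ i, ∑ j, s i j * (χ i k * χ j l)
            = ∑ i, ∑ j, s i j * χ i k := by
              refine Finset.sum_congr rfl fun i _ => Finset.sum_congr rfl fun j _ => ?_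
              rw [hlfull j, mul_one]
          _ = ∑ i, χ i k := by
              refine Finset.sum_congr rfl fun i _ => ?_
              rw [← Finset.sum_mul, hrow i, one_mul]
          _ = ∑ i, χ i k * χ i l := by
              refine Finset.sum_congr rfl fun i _ => ?_
              rw [hlfull i, mul_one]
      rw [this]
  · -- k is the last index : Q = P
    have hkfull : ∀ i, χ i k = 1 := by
      intro i
      have : i ≤ k := by
        rw [Fin.le_def]; omega
      simp [hχ, this]
    have : Q k l = P k l := by
      rw [hQ, hP]
      calc ∑ i, ∑ j, s i j * (χ i k * χ j l)
          = ∑ i, ∑ j, s i j * χ j l := by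
            refine Finset.sum_congr rfl fun i _ => Finset.sum_congr rfl fun j _ => ?_
            rw [hkfull i, one_mul]
        _ = ∑ j, χ j l := by
            rw [Finset.sum_comm]
            refine Finset.sum_congr rfl fun j _ => ?_
            rw [← Finset.sum_mul, hcol j, one_mul]
        _ = ∑ i, χ i k * χ i l := by
            refine Finset.sum_congr rfl fun i _ => ?_
            rw [hkfull i, one_mul]
    rw [this]

lemma hw_ds' {N : ℕ} (s : Matrix (Fin N) (Fin N) ℝ)
    (hpos : ∀ i j, 0 ≤ s i j) (hrow : ∀ i, ∑ j, s i j = 1) (hcol : ∀ j, ∑ i, s i j = 1)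
    (μ ν : Fin N → ℝ) (hμa : Antitone μ) (hνa : Antitone ν) :
    ∑ i, ∑ j, s i j * (μ i * ν j) ≤ ∑ i, μ i * ν i := by
  cases N with
  | zero => simp
  | succ n => exact hw_ds s hpos hrow hcol μ ν hμa hνa

lemma hw_key_trace {N : ℕ} (U V : Matrix (Fin N) (Fin N) ℝ)
    (hU : U * star U = 1) (hU' : star U * U = 1) (d e : Fin N → ℝ) :
    trace ((U * diagonal d * star U) * (V * diagonal e * star V))
      = ∑ i, ∑ j, d i * e j * ((star U * V) i j)^2 := by
  set W := star U * V with hW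
  have hV : V = U * W := by rw [hW, ← mul_assoc, hU, one_mul]
  have cancel : ∀ X : Matrix (Fin N) (Fin N) ℝ, star U * (U * X) = X := by
    intro X; rw [← mul_assoc, hU', one_mul]
  have h1 : (U * diagonal d * star U) * (V * diagonal e * star V)
      = U * ((diagonal d * (W * (diagonal e * star W))) * star U) := by
    rw [hV]
    simp only [Matrix.mul_assoc, StarMul.star_mul, star_star, cancel]
  rw [h1, Matrix.trace_mul_comm, Matrix.mul_assoc, hU', Matrix.mul_one]
  rw [Matrix.trace]
  refine Finset.sum_congr rfl fun i _ => ?_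
  rw [Matrix.diag_apply, Matrix.diagonal_mul, Matrix.mul_apply, Finset.mul_sum]
  refine Finset.sum_congr rfl fun j _ => ?_
  rw [Matrix.diagonal_mul, Matrix.star_apply, star_trivial]
  ring

theorem hoffman_wielandt (N : ℕ)
    (A B : Matrix (Fin N) (Fin N) ℝ)
    (hA : A.IsHermitian) (hB : B.IsHermitian)
    (μ ν : Fin N → ℝ)
    (σ τ : Equiv.Perm (Fin N))
    (hμ : μ = hA.eigenvalues ∘ σ) (hν : ν = hB.eigenvalues ∘ τ)
    (hμa : Antitone μ) (hνa : Antitone ν) :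
    ∑ i : Fin N, (μ i - ν i) ^ 2
      ≤ ∑ i : Fin N, ∑ j : Fin N, (A i j - B i j) ^ 2 := by
  classical
  set U : Matrix (Fin N) (Fin N) ℝ := (hA.eigenvectorUnitary : Matrix (Fin N) (Fin N) ℝ) with hUdef
  set V : Matrix (Fin N) (Fin N) ℝ := (hB.eigenvectorUnitary : Matrix (Fin N) (Fin N) ℝ) with hVdef
  set d : Fin N → ℝ := hA.eigenvalues with hd
  set e : Fin N → ℝ := hB.eigenvalues with he
  have hU1 : U * star U = 1 := (Matrix.mem_unitaryGroup_iff).mp hA.eigenvectorUnitary.2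
  have hU2 : star U * U = 1 := (Matrix.mem_unitaryGroup_iff').mp hA.eigenvectorUnitary.2
  have hV1 : V * star V = 1 := (Matrix.mem_unitaryGroup_iff).mp hB.eigenvectorUnitary.2
  have hV2 : star V * V = 1 := (Matrix.mem_unitaryGroup_iff').mp hB.eigenvectorUnitary.2
  have hAspec : A = U * diagonal d * star U := by
    have := hA.spectral_theorem
    rwa [RCLike.ofReal_real_eq_id, Function.id_comp] at this
  have hBspec : B = V * diagonal e * star V := by
    have := hB.spectral_theorem
    rwa [RCLike.ofReal_real_eq_id, Function.id_comp] at this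
  set W : Matrix (Fin N) (Fin N) ℝ := star U * V with hWdef
  have hT : trace (A * B) = ∑ i, ∑ j, d i * e j * (W i j)^2 := by
    rw [hAspec, hBspec]; exact hw_key_trace U V hU1 hU2 d e
  have htrA : trace (A * A) = ∑ i, d i ^ 2 := by
    rw [hAspec, hw_key_trace U U hU1 hU2 d d, hU2]
    refine Finset.sum_congr rfl fun i _ => ?_
    rw [Finset.sum_eq_single i]
    · simp [Matrix.one_apply_eq]; ring
    · intro j _ hj
      simp [Matrix.one_apply_ne' hj]
    · simp
  have htrB : trace (B * B) = ∑ i, e i ^ 2 := by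
    rw [hBspec, hw_key_trace V V hV1 hV2 e e, hV2]
    refine Finset.sum_congr rfl fun i _ => ?_
    rw [Finset.sum_eq_single i]
    · simp [Matrix.one_apply_eq]; ring
    · intro j _ hj
      simp [Matrix.one_apply_ne' hj]
    · simp
  have hABsym : ∀ i j, (A - B) j i = (A - B) i j := by
    intro i j
    have h := (hA.sub hB)
    calc (A - B) j i = star ((A-B) j i) := (star_trivial _).symm
    _ = (A - B)ᴴ i j := (Matrix.conjTranspose_apply _ _ _).symm
    _ = (A - B) i j := by rw [h]
  have hFro : ∑ i, ∑ j, (A i j - B i j)^2 = trace ((A - B) * (A - B)) := by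
    rw [Matrix.trace]
    rw [Finset.sum_comm]
    refine Finset.sum_congr rfl fun i _ => ?_
    rw [Matrix.diag_apply, Matrix.mul_apply]
    refine Finset.sum_congr rfl fun j _ => ?_
    rw [hABsym j i]
    simp [Matrix.sub_apply, pow_two]
  have htr2 : trace ((A - B) * (A - B))
      = trace (A*A) - 2 * trace (A*B) + trace (B*B) := by
    have hexp : (A - B) * (A - B) = A*A - (A*B + B*A) + B*B := by noncomm_ring
    rw [hexp, Matrix.trace_add, Matrix.trace_sub, Matrix.trace_add,
      Matrix.trace_mul_comm B A]
    ring
  have hWW : W * star W = 1 := by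
    rw [hWdef]
    simp only [StarMul.star_mul, star_star, Matrix.mul_assoc]
    rw [← Matrix.mul_assoc V, hV1, Matrix.one_mul, hU2]
  have hWW' : star W * W = 1 := by
    rw [hWdef]
    simp only [StarMul.star_mul, star_star, Matrix.mul_assoc]
    rw [← Matrix.mul_assoc U, hU1, Matrix.one_mul, hV2]
  have hrowW : ∀ i, ∑ j, (W (σ i) (τ j))^2 = 1 := by
    intro i
    have h1 : ∑ j, (W (σ i) (τ j))^2 = ∑ j, (W (σ i) j)^2 :=
      Equiv.sum_comp τ (fun j => (W (σ i) j)^2)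
    have h2 : (W * star W) (σ i) (σ i) = (1 : Matrix (Fin N) (Fin N) ℝ) (σ i) (σ i) := by
      rw [hWW]
    rw [Matrix.mul_apply, Matrix.one_apply_eq] at h2
    rw [h1, ← h2]
    exact Finset.sum_congr rfl fun j _ => by
      rw [Matrix.star_apply, star_trivial, pow_two]
  have hcolW : ∀ j, ∑ i, (W (σ i) (τ j))^2 = 1 := by
    intro j
    have h1 : ∑ i, (W (σ i) (τ j))^2 = ∑ i, (W i (τ j))^2 :=
      Equiv.sum_comp σ (fun i => (W i (τ j))^2)
    have h2 : (star W * W) (τ j) (τ j) = (1 : Matrix (Fin N) (Fin N) ℝ) (τ j) (τ j) := by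
      rw [hWW']
    rw [Matrix.mul_apply, Matrix.one_apply_eq] at h2
    rw [h1, ← h2]
    exact Finset.sum_congr rfl fun i _ => by
      rw [Matrix.star_apply, star_trivial, pow_two]
  have hT1 : trace (A * B) = ∑ i, ∑ j, (W (σ i) (τ j))^2 * (μ i * ν j) := by
    rw [hT, hμ, hν]
    refine Eq.symm ?_
    calc ∑ i, ∑ j, (W (σ i) (τ j))^2 * ((d ∘ σ) i * (e ∘ τ) j)
        = ∑ i, ∑ j, d (σ i) * e j * (W (σ i) j)^2 := by
          refine Finset.sum_congr rfl fun i _ => ?_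
          refine Eq.trans ?_ (Equiv.sum_comp τ (fun j => d (σ i) * e j * (W (σ i) j)^2))
          exact Finset.sum_congr rfl fun j _ => by simp [Function.comp]; ring
      _ = ∑ i, ∑ j, d i * e j * (W i j)^2 :=
          Equiv.sum_comp σ (fun i => ∑ j, d i * e j * (W i j)^2)
  -- key inequality via hw_ds
  have hkey : trace (A * B) ≤ ∑ i, μ i * ν i := by
    rw [hT1]
    exact hw_ds' (fun i j => (W (σ i) (τ j))^2)
      (fun i j => sq_nonneg _) hrowW hcolW μ ν hμa hνa
  have hμ2 : ∑ i, μ i ^ 2 = ∑ i, d i ^ 2 := by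
    rw [hμ]; exact Equiv.sum_comp σ (fun i => d i ^ 2)
  have hν2 : ∑ i, ν i ^ 2 = ∑ i, e i ^ 2 := by
    rw [hν]; exact Equiv.sum_comp τ (fun i => e i ^ 2)
  have hL : ∑ i, (μ i - ν i)^2
      = ∑ i, μ i ^2 + ∑ i, ν i ^2 - 2 * ∑ i, (μ i * ν i) := by
    calc ∑ i, (μ i - ν i)^2
        = ∑ i, (μ i ^2 + ν i ^2 - 2 * (μ i * ν i)) :=
          Finset.sum_congr rfl fun i _ => by ring
      _ = ∑ i, μ i ^2 + ∑ i, ν i ^2 - 2 * ∑ i, (μ i * ν i) := by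
          rw [Finset.sum_sub_distrib, Finset.sum_add_distrib, Finset.mul_sum]
  rw [hL, hFro, htr2, htrA, htrB, ← hμ2, ← hν2]
  linarith
end
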